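/- arXiv:2401.05549 — 2 statements merged into one kernel-verified Lean document; each statement's English description precedes it below -/
import Mathlib

section
/- Let ν > 0, a > 0, τ > 0, and v(τ, y) = y · ∫_0^{r(y)} η^{ν−1} e^{−η/2} dη / (2^ν Γ(ν)) with r(y) = (2ν/a)²/(y^{1/ν} τ). Then the partial derivative v_y(τ,y) tends to 0 as y → ∞, and for each fixed y > 0, v_y(τ,y) tends to 1 as τ → 0+. -/
/-!
Write `r = r(y)`. Since `y r'(y) = -r/ν`, the chain rule and the fundamental theorem of calculus
give `v_y = P(r) - r^ν e^(-r/2) / (2^ν Γ(ν+1))`, where `P` is the distribution function of `χ²`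
with `2ν` degrees of freedom. As `y → ∞` we have `r → 0` and both terms vanish; as `τ → 0+` we
have `r → ∞`, so `P(r) → 1` by the Gamma integral while the second term decays exponentially.
-/

open Set Filter Real MeasureTheory intervalIntegral Topology

lemma hasDerivAt_const_div_rpow {k p y : ℝ} (hy : 0 < y) :
    HasDerivAt (fun y' : ℝ => k / y' ^ p) (-(p * (k / y ^ p)) / y) y := by
  have hyp : 0 < y ^ p := rpow_pos_of_pos hy p
  refine ((hasDerivAt_const y k).div (hasDerivAt_rpow_const (p := p) (Or.inl hy.ne'))
    hyp.ne').congr_deriv ?_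
  rw [rpow_sub_one hy.ne']
  field_simp
  ring

lemma hasDerivAt_mul_comp_const_div_rpow {F : ℝ → ℝ} {f k p y : ℝ} (hy : 0 < y)
    (hF : HasDerivAt F f (k / y ^ p)) :
    HasDerivAt (fun y' : ℝ => y' * F (k / y' ^ p)) (F (k / y ^ p) - p * (k / y ^ p) * f) y := by
  refine ((hasDerivAt_id y).mul (hF.comp y (hasDerivAt_const_div_rpow hy))).congr_deriv ?_
  simp only [id, Function.comp_apply]
  field_simp
  ring

/-- The distribution function of `χ²` with `2ν` degrees of freedom. -/
noncomputable def chiSqCDF (ν x : ℝ) : ℝ :=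
  (∫ η in (0:ℝ)..x, η ^ (ν - 1) * exp (-η / 2)) / (2 ^ ν * Gamma ν)

/-- In the notation of the statement, `v_y(τ, y) = cevDelta ν (r(y))`. -/
noncomputable def cevDelta (ν r : ℝ) : ℝ :=
  chiSqCDF ν r - r ^ ν * exp (-r / 2) / (2 ^ ν * Gamma (ν + 1))

section

variable {ν : ℝ}

lemma intervalIntegrable_rpow_mul_exp_neg_half (hν : 0 < ν) (a b : ℝ) :
    IntervalIntegrable (fun η : ℝ => η ^ (ν - 1) * exp (-η / 2)) volume a b :=
  (intervalIntegrable_rpow' (by linarith)).mul_continuousOn (by fun_prop)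

lemma hasDerivAt_chiSqCDF (hν : 0 < ν) {x : ℝ} (hx : 0 < x) :
    HasDerivAt (chiSqCDF ν) (x ^ (ν - 1) * exp (-x / 2) / (2 ^ ν * Gamma ν)) x := by
  have hcont : ContinuousOn (fun η : ℝ => η ^ (ν - 1) * exp (-η / 2)) (Ioi 0) := fun η hη =>
    ((continuousAt_rpow_const η (ν - 1) (Or.inl (ne_of_gt hη))).mul
      (by fun_prop)).continuousWithinAt
  exact (integral_hasDerivAt_right (intervalIntegrable_rpow_mul_exp_neg_half hν 0 x)
    (hcont.stronglyMeasurableAtFilter isOpen_Ioi x hx)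
    (hcont.continuousAt (isOpen_Ioi.mem_nhds hx))).div_const _

lemma deriv_mul_chiSqCDF_const_div_rpow (hν : 0 < ν) {k y : ℝ} (hk : 0 < k) (hy : 0 < y) :
    deriv (fun y' : ℝ => y' * chiSqCDF ν (k / y' ^ (1 / ν))) y
      = cevDelta ν (k / y ^ (1 / ν)) := by
  have hr : 0 < k / y ^ (1 / ν) := div_pos hk (rpow_pos_of_pos hy _)
  rw [(hasDerivAt_mul_comp_const_div_rpow hy (hasDerivAt_chiSqCDF hν hr)).deriv, cevDelta,
    Gamma_add_one hν.ne', rpow_sub_one hr.ne']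
  have := Gamma_pos_of_pos hν
  field_simp

lemma continuous_chiSqCDF (hν : 0 < ν) : Continuous (chiSqCDF ν) :=
  (continuous_primitive (intervalIntegrable_rpow_mul_exp_neg_half hν) 0).div_const _

lemma tendsto_cevDelta_zero (hν : 0 < ν) : Tendsto (cevDelta ν) (𝓝 0) (𝓝 0) := by
  have hcont : ContinuousAt (cevDelta ν) 0 :=
    (continuous_chiSqCDF hν).continuousAt.sub
      (((continuousAt_rpow_const 0 ν (Or.inr hν.le)).mul (by fun_prop)).div_const _)
  simpa [cevDelta, chiSqCDF, zero_rpow hν.ne'] using hcont.tendsto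

lemma integral_rpow_mul_exp_neg_half_Ioi (hν : 0 < ν) :
    ∫ η in Ioi (0:ℝ), η ^ (ν - 1) * exp (-η / 2) = 2 ^ ν * Gamma ν := by
  have := integral_rpow_mul_exp_neg_mul_Ioi hν (by norm_num : (0:ℝ) < 1 / 2)
  rw [show (1:ℝ) / (1 / 2) = 2 by norm_num] at this
  rw [← this]
  refine setIntegral_congr_fun measurableSet_Ioi fun η _ => ?_
  ring_nf

lemma tendsto_chiSqCDF_atTop (hν : 0 < ν) : Tendsto (chiSqCDF ν) atTop (𝓝 1) := by
  have hint : IntegrableOn (fun η : ℝ => η ^ (ν - 1) * exp (-η / 2)) (Ioi 0) := by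
    refine (integrableOn_rpow_mul_exp_neg_mul_rpow (s := ν - 1) (p := 1) (b := 1 / 2)
      (by linarith) one_pos (by norm_num)).congr_fun (fun η _ => ?_) measurableSet_Ioi
    simp only [rpow_one]
    ring_nf
  have := (intervalIntegral_tendsto_integral_Ioi 0 hint tendsto_id).div_const
    (2 ^ ν * Gamma ν)
  rwa [integral_rpow_mul_exp_neg_half_Ioi hν, div_self (by positivity)] at this

lemma tendsto_cevDelta_atTop (hν : 0 < ν) : Tendsto (cevDelta ν) atTop (𝓝 1) := by
  have := (tendsto_chiSqCDF_atTop hν).sub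
    ((tendsto_rpow_mul_exp_neg_mul_atTop_nhds_zero ν (1 / 2) one_half_pos).div_const
      (2 ^ ν * Gamma (ν + 1)))
  simp only [sub_zero, zero_div] at this
  refine this.congr fun x => ?_
  rw [cevDelta]
  ring_nf

lemma deriv_cev_forward (hν : 0 < ν) {c τ y : ℝ} (hc : 0 < c) (hτ : 0 < τ) (hy : 0 < y) :
    deriv (fun y' : ℝ => y' *
        (∫ η in (0:ℝ)..(c / (y' ^ (1 / ν) * τ)), η ^ (ν - 1) * exp (-η / 2))
          / (2 ^ ν * Gamma ν)) y
      = cevDelta ν (c / τ / y ^ (1 / ν)) := by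
  have hv : (fun y' : ℝ => y' *
        (∫ η in (0:ℝ)..(c / (y' ^ (1 / ν) * τ)), η ^ (ν - 1) * exp (-η / 2))
          / (2 ^ ν * Gamma ν))
      = fun y' => y' * chiSqCDF ν (c / τ / y' ^ (1 / ν)) := by
    ext y'
    rw [chiSqCDF, mul_div_assoc, div_mul_eq_div_div_swap c]
  rw [hv, deriv_mul_chiSqCDF_const_div_rpow hν (div_pos hc hτ) hy]

end

/-- For the CEV forward price `v(τ,y) = y ∫_0^{r(τ,y)} η^(ν-1) e^(-η/2) dη/(2^ν Γ(ν))`,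
`r(τ,y) = (2ν/a)²/(y^(1/ν) τ)`: the partial derivative `v_y(τ,·)` tends to `0` at `∞`
(for fixed `τ > 0`), and for each fixed `y > 0`, `v_y(τ,y) → 1` as `τ → 0+`. -/
theorem cev_forward_deriv_limits
    (ν a : ℝ) (hν : 0 < ν) (ha : 0 < a) :
    (∀ τ : ℝ, 0 < τ →
      Tendsto
        (fun y : ℝ => deriv (fun y' : ℝ => y' *
          (∫ η in (0:ℝ)..((2*ν/a)^2 / (y' ^ (1/ν) * τ)),
            η ^ (ν - 1) * Real.exp (-η/2)) / ((2:ℝ) ^ ν * Real.Gamma ν)) y)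
        atTop (nhds 0)) ∧
    (∀ y : ℝ, 0 < y →
      Tendsto
        (fun τ : ℝ => deriv (fun y' : ℝ => y' *
          (∫ η in (0:ℝ)..((2*ν/a)^2 / (y' ^ (1/ν) * τ)),
            η ^ (ν - 1) * Real.exp (-η/2)) / ((2:ℝ) ^ ν * Real.Gamma ν)) y)
        (nhdsWithin 0 (Ioi 0)) (nhds 1)) := by
  have hc : 0 < (2 * ν / a) ^ 2 := by positivity
  constructor
  · intro τ hτ
    have hr : Tendsto (fun y : ℝ => (2 * ν / a) ^ 2 / τ / y ^ (1 / ν)) atTop (𝓝 0) :=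
      tendsto_const_nhds.div_atTop (tendsto_rpow_atTop (by positivity))
    refine ((tendsto_cevDelta_zero hν).comp hr).congr' ?_
    filter_upwards [eventually_gt_atTop 0] with y hy
    exact (deriv_cev_forward hν hc hτ hy).symm
  · intro y hy
    have hr : Tendsto (fun τ : ℝ => (2 * ν / a) ^ 2 / τ / y ^ (1 / ν)) (𝓝[>] 0) atTop :=
      (tendsto_inv_nhdsGT_zero.const_mul_atTop hc).atTop_div_const (by positivity)
    refine ((tendsto_cevDelta_atTop hν).comp hr).congr' ?_
    filter_upwards [self_mem_nhdsWithin] with τ hτ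
    exact (deriv_cev_forward hν hc hτ hy).symm
end

section
/- The CEV forward price v(τ, y) = y · ∫_0^{r} η^{ν−1} e^{−η/2} dη / (2^ν Γ(ν)) with r = (2ν/a)²/(y^{1/ν} τ) satisfies the Black–Scholes equation v_τ = (a²/2) y^{2+1/ν} v_{yy} for all τ > 0, y > 0. -/
/-!
Write `v = y F(r) / C` with `F(s) = ∫₀ˢ f`, `f(η) = η^(ν-1) e^(-η/2)`, `C = 2^ν Γ(ν)` and
`r = K / (y^(1/ν) τ)`, so that `∂_τ r = -r/τ` and `∂_y r = -r/(ν y)`. Then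
`v_τ = -y r f(r) / (τ C)` and `v_y = (F(r) - r f(r)/ν) / C`. Differentiating once more, the
identity `s f'(s) = (ν - 1 - s/2) f(s)` cancels everything but `v_yy = -r² f(r) / (2ν² y C)`.
As `K = y^(1/ν) τ r`, this gives `v_τ = (2ν²/K) y^(2+1/ν) v_yy`, and `2ν²/K = a²/2` for
`K = (2ν/a)²`.
-/

open Set Real

/-- The χ² density with `2ν` degrees of freedom, without its normalisation `2^ν Γ(ν)`. -/
noncomputable def chiSqKernel (ν η : ℝ) : ℝ := η ^ (ν - 1) * exp (-η / 2)

noncomputable def chiSqArg (ν K τ y : ℝ) : ℝ := K / (y ^ (1 / ν) * τ)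

noncomputable def cevForward (ν K τ y : ℝ) : ℝ :=
  y * (∫ η in (0:ℝ)..chiSqArg ν K τ y, chiSqKernel ν η) / (2 ^ ν * Gamma ν)

section Kernel

variable {ν s : ℝ}

lemma hasDerivAt_chiSqKernel (hs : 0 < s) :
    HasDerivAt (chiSqKernel ν) (((ν - 1) / s - 1 / 2) * chiSqKernel ν s) s := by
  have hpow : HasDerivAt (· ^ (ν - 1)) ((ν - 1) * s ^ (ν - 1 - 1)) s :=
    hasDerivAt_rpow_const (Or.inl hs.ne')
  have hexp : HasDerivAt (fun η => exp (-η / 2)) (exp (-s / 2) * (-1 / 2)) s :=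
    ((hasDerivAt_neg s).div_const 2).exp
  refine (hpow.mul hexp).congr_deriv ?_
  rw [chiSqKernel, rpow_sub_one hs.ne']
  field_simp
  ring

lemma hasDerivAt_integral_chiSqKernel (hν : 0 < ν) (hs : 0 < s) :
    HasDerivAt (fun s => ∫ η in (0:ℝ)..s, chiSqKernel ν η) (chiSqKernel ν s) s := by
  have hcont : Continuous fun η : ℝ => exp (-η / 2) := by fun_prop
  apply intervalIntegral.integral_hasDerivAt_right
  · exact (intervalIntegral.intervalIntegrable_rpow' (by linarith)).mul_continuousOn
      hcont.continuousOn
  · exact (Measurable.stronglyMeasurable (by unfold chiSqKernel; fun_prop))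
      |>.stronglyMeasurableAtFilter
  · exact (continuousAt_rpow_const s (ν - 1) (Or.inl hs.ne')).mul hcont.continuousAt

end Kernel

section Arg

variable {ν K τ y : ℝ}

lemma chiSqArg_pos (hK : 0 < K) (hτ : 0 < τ) (hy : 0 < y) : 0 < chiSqArg ν K τ y := by
  unfold chiSqArg; positivity

lemma hasDerivAt_chiSqArg_time (hy : 0 < y) (hτ : τ ≠ 0) :
    HasDerivAt (fun t => chiSqArg ν K t y) (-chiSqArg ν K τ y / τ) τ := by
  have hY : y ^ (1 / ν) ≠ 0 := (rpow_pos_of_pos hy _).ne'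
  refine ((hasDerivAt_const τ K).div ((hasDerivAt_id τ).const_mul (y ^ (1 / ν)))
    (mul_ne_zero hY hτ)).congr_deriv ?_
  rw [chiSqArg, id]
  field_simp
  ring

lemma hasDerivAt_chiSqArg_space (hy : 0 < y) (hτ : τ ≠ 0) :
    HasDerivAt (chiSqArg ν K τ) (-chiSqArg ν K τ y / (ν * y)) y := by
  have hY : y ^ (1 / ν) ≠ 0 := (rpow_pos_of_pos hy _).ne'
  refine ((hasDerivAt_const y K).div
    ((hasDerivAt_rpow_const (p := 1 / ν) (Or.inl hy.ne')).mul_const τ)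
    (mul_ne_zero hY hτ)).congr_deriv ?_
  rw [chiSqArg, rpow_sub_one hy.ne']
  field_simp
  ring

end Arg

section Forward

variable {ν K τ y : ℝ}

lemma hasDerivAt_cevForward_time (hν : 0 < ν) (hK : 0 < K) (hτ : 0 < τ) (hy : 0 < y) :
    HasDerivAt (fun t => cevForward ν K t y)
      (-(y * chiSqArg ν K τ y * chiSqKernel ν (chiSqArg ν K τ y)) /
        (τ * (2 ^ ν * Gamma ν))) τ := by
  have hr := chiSqArg_pos (ν := ν) hK hτ hy
  refine ((((hasDerivAt_integral_chiSqKernel hν hr).comp τ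
    (hasDerivAt_chiSqArg_time hy hτ.ne')).const_mul y).div_const _).congr_deriv ?_
  field_simp

lemma hasDerivAt_cevForward_space (hν : 0 < ν) (hK : 0 < K) (hτ : 0 < τ) (hy : 0 < y) :
    HasDerivAt (cevForward ν K τ)
      (((∫ η in (0:ℝ)..chiSqArg ν K τ y, chiSqKernel ν η) -
        chiSqArg ν K τ y * chiSqKernel ν (chiSqArg ν K τ y) / ν) / (2 ^ ν * Gamma ν)) y := by
  have hr := chiSqArg_pos (ν := ν) hK hτ hy
  refine (((hasDerivAt_id y).mul ((hasDerivAt_integral_chiSqKernel hν hr).comp y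
    (hasDerivAt_chiSqArg_space hy hτ.ne'))).div_const _).congr_deriv ?_
  rw [Function.comp_apply, id]
  field_simp
  ring

lemma hasDerivAt_deriv_cevForward_space (hν : 0 < ν) (hK : 0 < K) (hτ : 0 < τ) (hy : 0 < y) :
    HasDerivAt (deriv (cevForward ν K τ))
      (-(chiSqArg ν K τ y ^ 2 * chiSqKernel ν (chiSqArg ν K τ y)) /
        (2 * ν ^ 2 * y * (2 ^ ν * Gamma ν))) y := by
  have hderiv : deriv (cevForward ν K τ) =ᶠ[nhds y] fun x =>
      ((∫ η in (0:ℝ)..chiSqArg ν K τ x, chiSqKernel ν η) -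
        chiSqArg ν K τ x * chiSqKernel ν (chiSqArg ν K τ x) / ν) / (2 ^ ν * Gamma ν) := by
    filter_upwards [Ioi_mem_nhds hy] with x hx
    exact (hasDerivAt_cevForward_space hν hK hτ hx).deriv
  refine HasDerivAt.congr_of_eventuallyEq ?_ hderiv
  have hr := chiSqArg_pos (ν := ν) hK hτ hy
  have hr' := hasDerivAt_chiSqArg_space (ν := ν) (K := K) hy hτ.ne'
  have hF := (hasDerivAt_integral_chiSqKernel hν hr).comp y hr'
  have hf := (hasDerivAt_chiSqKernel (ν := ν) hr).comp y hr'
  refine ((hF.sub ((hr'.mul hf).div_const ν)).div_const _).congr_deriv ?_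
  rw [Function.comp_apply]
  field_simp
  ring

theorem cevForward_bse (hν : 0 < ν) (hK : 0 < K) (hτ : 0 < τ) (hy : 0 < y) :
    deriv (fun t => cevForward ν K t y) τ =
      2 * ν ^ 2 / K * y ^ (2 + 1 / ν) * deriv (deriv (cevForward ν K τ)) y := by
  rw [(hasDerivAt_cevForward_time hν hK hτ hy).deriv,
    (hasDerivAt_deriv_cevForward_space hν hK hτ hy).deriv,
    show 2 + 1 / ν = 1 / ν + 1 + 1 by ring, rpow_add_one hy.ne', rpow_add_one hy.ne']
  simp only [chiSqArg]
  field_simp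

end Forward

/-- The CEV forward price `v(τ,y) = y ∫_0^{r} η^(ν-1) e^(-η/2) dη/(2^ν Γ(ν))`,
`r = (2ν/a)²/(y^(1/ν) τ)`, satisfies the Black–Scholes equation
`v_τ = (a²/2) y^(2+1/ν) v_{yy}` for all `τ > 0`, `y > 0`. -/
theorem cev_forward_satisfies_bse
    (ν a : ℝ) (hν : 0 < ν) (ha : 0 < a) :
    ∀ τ : ℝ, 0 < τ → ∀ y : ℝ, 0 < y →
      deriv (fun t : ℝ => y *
          (∫ η in (0:ℝ)..((2*ν/a)^2 / (y ^ (1/ν) * t)),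
            η ^ (ν - 1) * Real.exp (-η/2)) / ((2:ℝ) ^ ν * Real.Gamma ν)) τ
        = a^2 / 2 * y ^ (2 + 1/ν) *
          deriv (deriv (fun y' : ℝ => y' *
            (∫ η in (0:ℝ)..((2*ν/a)^2 / (y' ^ (1/ν) * τ)),
              η ^ (ν - 1) * Real.exp (-η/2)) / ((2:ℝ) ^ ν * Real.Gamma ν))) y := by
  intro τ hτ y hy
  have hcoeff : a ^ 2 / 2 = 2 * ν ^ 2 / (2 * ν / a) ^ 2 := by field_simp
  rw [hcoeff]
  exact cevForward_bse hν (by positivity) hτ hy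
end
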